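/- Let (Ω, 𝓕, P) be a probability space, G a finite index set, T a nonempty subset of G, and for each nonempty subset L of G let R_L ∈ 𝓕 be a measurable rejection event. Suppose P(R_T) ≤ α. Then the probability that the closed testing procedure makes at least one false rejection, i.e. P(⋃_{∅ ≠ K ⊆ T} ⋂_{L : K ⊆ L ⊆ G} R_L), is at most α. That is, closed testing strongly controls the familywise error rate at level α whenever the local test of the intersection of all true hypotheses has level α. -/
import Mathlib


open MeasureTheory

/-- Closed testing strongly controls the familywise error rate: if the local
test of the intersection of all true hypotheses `T` has level `α`
(`P (R T) ≤ α`), then the probability that the closed testing procedure makes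
at least one false rejection is at most `α`. -/
theorem closed_testing_fwer_control {Ω γ : Type*} [MeasurableSpace Ω]
    (P : Measure Ω) [IsProbabilityMeasure P]
    (G T : Finset γ) (R : Finset γ → Set Ω)
    (hmeas : ∀ L : Finset γ, L.Nonempty → MeasurableSet (R L))
    (hT : T.Nonempty) (hTG : T ⊆ G) (α : ENNReal)
    (hlevel : P (R T) ≤ α) :
    P (⋃ K ∈ {K : Finset γ | K.Nonempty ∧ K ⊆ T},
        ⋂ L ∈ {L : Finset γ | K ⊆ L ∧ L ⊆ G}, R L) ≤ α := by
  refine le_trans (measure_mono ?_) hlevel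
  intro x hx
  simp only [Set.mem_iUnion, Set.mem_iInter] at hx
  obtain ⟨K, ⟨hKne, hKT⟩, h⟩ := hx
  exact h T ⟨hKT, hTG⟩
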